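/- arXiv:0806.1139 — 5 statements merged into one kernel-verified Lean document; each statement's English description precedes it below -/
import Mathlib

section
/- Let σ be a finite sequence over a set S equipped with an equivalence relation ∼, and let ω be a (finite or infinite) sequence over S. If there exist strictly increasing functions f and g from {0,…,|σ|−1} to the index set of ω such that σ ⊑_f ω and σ ⊑_g ω, and both f and g satisfy the freshness property (for each i, ω_{f(i)} ≁ ω_j for all j < f(i)), then f = g. -/
open scoped ENNReal Classical
open MeasureTheory

namespace CE

variable {S : Type}

/-- Positive-probability transition (edge of the underlying digraph). -/
def edge (P : S → S → ℝ≥0∞) (s t : S) : Prop := 0 < P s t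

/-- Finite path of the Markov chain with transition function `P`, starting at `s`. -/
def IsFPath (P : S → S → ℝ≥0∞) (s : S) (σ : List S) : Prop :=
  σ.head? = some s ∧ σ.Chain' (edge P)

/-- Infinite path of the Markov chain with transition function `P`, starting at `s`. -/
def IsPath (P : S → S → ℝ≥0∞) (s : S) (ω : ℕ → S) : Prop :=
  ω 0 = s ∧ ∀ n, edge P (ω n) (ω (n + 1))

/-- Reachability in the underlying digraph. -/
def Reach (P : S → S → ℝ≥0∞) : S → S → Prop :=
  Relation.ReflTransGen (edge P)

/-- Same strongly connected component. -/
def sccRel (P : S → S → ℝ≥0∞) (s t : S) : Prop :=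
  Reach P s t ∧ Reach P t s

/-- `s` belongs to a nontrivial SCC (more than one state, or a self-loop). -/
def nontriv (P : S → S → ℝ≥0∞) (s : S) : Prop :=
  (∃ t, t ≠ s ∧ sccRel P s t) ∨ edge P s s

/-- Cylinder (cone) of a finite path. -/
def Cyl (ρ : List S) : Set (ℕ → S) := {ω | ∀ i : Fin ρ.length, ω i.1 = ρ.get i}

/-- Finite paths from `s` reaching `A` exactly at their last state. -/
def FReach (P : S → S → ℝ≥0∞) (s : S) (A : Set S) : Set (List S) :=
  {σ | IsFPath P s σ ∧ (∃ h : σ ≠ [], σ.getLast h ∈ A) ∧ ∀ x ∈ σ.dropLast, x ∉ A}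

/-- Infinite sequences that eventually visit `A`. -/
def ReachSet (A : Set S) : Set (ℕ → S) := {ω | ∃ i, ω i ∈ A}

/-- Product of transition probabilities along a finite path. -/
noncomputable def cylProb (P : S → S → ℝ≥0∞) (d : S) (ρ : List S) : ℝ≥0∞ :=
  ∏ i ∈ Finset.range (ρ.length - 1), P (ρ.getD i d) (ρ.getD (i + 1) d)

/-- `σ ⪯_f ω`: subsequence embedding satisfying freshness and inertia w.r.t. `r`. -/
structure Embeds (r : S → S → Prop) (σ : List S) (ω : ℕ → S) (f : ℕ → ℕ) : Prop where
  mono : ∀ i j, i < j → j < σ.length → f i < f j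
  agree : ∀ i : Fin σ.length, σ.get i = ω (f i.1)
  fresh : ∀ i < σ.length, ∀ j < f i, ¬ r (ω (f i)) (ω j)
  inertia : ∀ i, i + 1 < σ.length → ∀ j, f i < j → j < f (i + 1) → r (ω (f i)) (ω j)

/-- There is a path from `s` to `t` staying in the SCC of `s` until `t`. -/
def exitReach (P : S → S → ℝ≥0∞) (s t : S) : Prop :=
  ∃ l : List S, List.Chain (edge P) s (l ++ [t]) ∧ ∀ u ∈ s :: l, sccRel P s u

/-- The SCC of `s` has no output states. -/
def noOut (P : S → S → ℝ≥0∞) (s : S) : Prop :=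
  ∀ u t, sccRel P s u → edge P u t → sccRel P s t

/-- Edges of the acyclic reduction. -/
def AcEdge (P : S → S → ℝ≥0∞) (s t : S) : Prop :=
  (¬ nontriv P s ∧ edge P s t) ∨
  (nontriv P s ∧ ¬ sccRel P s t ∧ exitReach P s t) ∨
  (nontriv P s ∧ t = s ∧ noOut P s)

/-- States of the acyclic reduction: states outside nontrivial SCCs and input states. -/
def AcState (P : S → S → ℝ≥0∞) (s : S) : Prop :=
  ¬ nontriv P s ∨ ∃ t, ¬ sccRel P s t ∧ edge P t s

/-- A rail: a finite path of the acyclic reduction starting at `s0`. -/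
def IsRail (P : S → S → ℝ≥0∞) (s0 : S) (σ : List S) : Prop :=
  σ.head? = some s0 ∧ σ.Chain' (AcEdge P) ∧ ∀ x ∈ σ, AcState P x

/-- The torrent of a rail `σ`: infinite paths into which `σ` embeds. -/
def Torr (P : S → S → ℝ≥0∞) (r : S → S → Prop) (s0 : S) (σ : List S) : Set (ℕ → S) :=
  {ω | IsPath P s0 ω ∧ ∃ f, Embeds r σ ω f}

def toSeq (d : S) (ρ : List S) : ℕ → S := fun n => ρ.getD n d

/-- Torrent generators: finite paths `ρ` with an embedding of `σ` ending at the last state. -/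
def Gen (P : S → S → ℝ≥0∞) (r : S → S → Prop) (s0 : S) (σ : List S) : Set (List S) :=
  {ρ | IsFPath P s0 ρ ∧ ρ ≠ [] ∧ ∃ f, Embeds r σ (toSeq s0 ρ) f ∧
    (∀ i < σ.length, f i < ρ.length) ∧ f (σ.length - 1) = ρ.length - 1}

/-- Finite paths from `t` to `s` staying in the SCC of `t` except the final state `s`. -/
def ExitPaths (P : S → S → ℝ≥0∞) (t s : S) : Set (List S) :=
  {π | π.head? = some t ∧ (∃ h : π ≠ [], π.getLast h = s) ∧ π.Chain' (edge P) ∧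
    ∀ u ∈ π.dropLast, sccRel P t u}

/-- `M_ψ`: make absorbing all states of `A` and all states not reaching `A`. -/
noncomputable def absP (P : S → S → ℝ≥0∞) (A : Set S) : S → S → ℝ≥0∞ := fun s t =>
  if s ∈ A ∨ ¬ ∃ a ∈ A, Reach P s a then (if t = s then 1 else 0) else P s t

/-- Absorbing state. -/
def Absorbing (P : S → S → ℝ≥0∞) (s : S) : Prop :=
  P s s = 1 ∧ ∀ t, t ≠ s → P s t = 0

/-- Output states of the SCC of `k`. -/
def OutK (P : S → S → ℝ≥0∞) (k : S) : Set S :=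
  {t | ¬ sccRel P k t ∧ ∃ u, sccRel P k u ∧ edge P u t}

/-- The chain `M_K` of the SCC of `k`, with the output states made absorbing. -/
noncomputable def PK (P : S → S → ℝ≥0∞) (k : S) : S → S → ℝ≥0∞ := fun s t =>
  if sccRel P k s then P s t else (if t = s then 1 else 0)

/-- Absorbing state of the acyclic reduction: its only edge is a self-loop. -/
def AcAbsorbing (P : S → S → ℝ≥0∞) (s : S) : Prop :=
  AcEdge P s s ∧ ∀ t, AcEdge P s t → t = s


theorem eq_of_apply_eq_of_fresh {α : Type*} {r : α → α → Prop} (hr : ∀ x, r x x)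
    {ω : ℕ → α} {a b : ℕ} (hab : ω a = ω b)
    (ha : ∀ j < a, ¬ r (ω a) (ω j)) (hb : ∀ j < b, ¬ r (ω b) (ω j)) : a = b :=
  le_antisymm (not_lt.1 fun hlt => ha b hlt (hab ▸ hr _))
    (not_lt.1 fun hlt => hb a hlt (hab ▸ hr _))

theorem embedding_unique_general (r : S → S → Prop) (hr : Equivalence r)
    (σ : List S) (ω : ℕ → S) (f g : ℕ → ℕ)
    (hfagree : ∀ i : Fin σ.length, σ.get i = ω (f i.1))
    (hgagree : ∀ i : Fin σ.length, σ.get i = ω (g i.1))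
    (hffresh : ∀ i < σ.length, ∀ j < f i, ¬ r (ω (f i)) (ω j))
    (hgfresh : ∀ i < σ.length, ∀ j < g i, ¬ r (ω (g i)) (ω j)) :
    ∀ i < σ.length, f i = g i := fun i hi =>
  eq_of_apply_eq_of_fresh hr.refl ((hfagree ⟨i, hi⟩).symm.trans (hgagree ⟨i, hi⟩))
    (hffresh i hi) (hgfresh i hi)

/-- two subsequence embeddings of `σ` into `ω` both satisfying the
freshness property coincide. -/
theorem embedding_unique (r : S → S → Prop) (hr : Equivalence r)
    (σ : List S) (ω : ℕ → S) (f g : ℕ → ℕ)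
    (hfmono : ∀ i j, i < j → j < σ.length → f i < f j)
    (hgmono : ∀ i j, i < j → j < σ.length → g i < g j)
    (hfagree : ∀ i : Fin σ.length, σ.get i = ω (f i.1))
    (hgagree : ∀ i : Fin σ.length, σ.get i = ω (g i.1))
    (hffresh : ∀ i < σ.length, ∀ j < f i, ¬ r (ω (f i)) (ω j))
    (hgfresh : ∀ i < σ.length, ∀ j < g i, ¬ r (ω (g i)) (ω j)) :
    ∀ i < σ.length, f i = g i :=
  embedding_unique_general r hr σ ω f g hfagree hgagree hffresh hgfresh

end CE
end

section
/- Let M be a finite Markov chain and σ a rail of M (a finite path of the acyclic reduction Ac(M)). Define the set of torrent generators Gen(M,σ) = { ρ ∈ FPaths(M) | ∃f: σ ⪯_f ρ and f(|σ|−1) = |ρ|−1 }. Then the torrent Torr(M,σ) equals the disjoint union of the cylinders Cyl(ρ) over ρ ∈ Gen(M,σ): Torr(M,σ) = ⨄_{ρ ∈ Gen(M,σ)} Cyl(ρ), and moreover the cylinders Cyl(ρ) for distinct ρ ∈ Gen(M,σ) are pairwise disjoint. -/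
open scoped ENNReal Classical
open MeasureTheory

namespace CE

variable {S : Type}

/-!
A path `ω` of the torrent, embedding `σ` via `f`, lies in the cone of its prefix ending at
`f (|σ| - 1)`, and that prefix is a generator. Conversely an embedding of `σ` into a generator
is an embedding into every path of its cone. Since `∼` is reflexive, freshness forces
`f (|σ| - 1)` to be the first visit of `ω` to the last state of `σ`, independently of `f`; so two
generators whose cones meet have the same length, and hence are equal.
-/

namespace Embeds

variable {r : S → S → Prop} {σ : List S} {ω ω' : ℕ → S} {f : ℕ → ℕ}

lemma le_last (h : Embeds r σ ω f) {i : ℕ} (hi : i < σ.length) :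
    f i ≤ f (σ.length - 1) := by
  rcases Nat.lt_or_ge i (σ.length - 1) with hlt | hge
  · exact (h.mono i _ hlt (by omega)).le
  · rw [show i = σ.length - 1 by omega]

lemma congr_of_eq_lt {N : ℕ} (h : Embeds r σ ω f) (hf : ∀ i < σ.length, f i < N)
    (hω : ∀ k < N, ω k = ω' k) : Embeds r σ ω' f where
  mono := h.mono
  agree i := by rw [h.agree i, hω _ (hf i.1 i.2)]
  fresh i hi j hj := by
    rw [← hω _ (hf i hi), ← hω _ (hj.trans (hf i hi))]
    exact h.fresh i hi j hj
  inertia i hi j h₁ h₂ := by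
    have hfi : f (i + 1) < N := hf _ hi
    rw [← hω _ (h₁.trans (h₂.trans hfi)), ← hω _ (h₂.trans hfi)]
    exact h.inertia i hi j h₁ h₂

lemma last_eq (hr : ∀ s, r s s) (hσ : σ ≠ []) {f₁ f₂ : ℕ → ℕ}
    (h₁ : Embeds r σ ω f₁) (h₂ : Embeds r σ ω f₂) :
    f₁ (σ.length - 1) = f₂ (σ.length - 1) := by
  have hlast : σ.length - 1 < σ.length := Nat.sub_one_lt_of_lt (List.length_pos_iff.mpr hσ)
  have fresh_of_lt {g₁ g₂ : ℕ → ℕ} (e₁ : Embeds r σ ω g₁) (e₂ : Embeds r σ ω g₂)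
      (hlt : g₁ (σ.length - 1) < g₂ (σ.length - 1)) : False := by
    have hsame : ω (g₂ (σ.length - 1)) = ω (g₁ (σ.length - 1)) := by
      rw [← e₁.agree ⟨_, hlast⟩, ← e₂.agree ⟨_, hlast⟩]
    exact e₂.fresh _ hlast _ hlt (hsame ▸ hr _)
  rcases lt_trichotomy (f₁ (σ.length - 1)) (f₂ (σ.length - 1)) with hlt | heq | hgt
  · exact (fresh_of_lt h₁ h₂ hlt).elim
  · exact heq
  · exact (fresh_of_lt h₂ h₁ hgt).elim

end Embeds

lemma toSeq_eq_of_mem_Cyl {ρ : List S} {ω : ℕ → S} (d : S) (hω : ω ∈ Cyl ρ) {k : ℕ}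
    (hk : k < ρ.length) : toSeq d ρ k = ω k := by
  rw [toSeq, List.getD_eq_getElem _ _ hk]
  exact (hω ⟨k, hk⟩).symm

lemma eq_of_mem_Cyl_of_length_eq {ρ₁ ρ₂ : List S} {ω : ℕ → S} (h₁ : ω ∈ Cyl ρ₁)
    (h₂ : ω ∈ Cyl ρ₂) (hlen : ρ₁.length = ρ₂.length) : ρ₁ = ρ₂ :=
  List.ext_get hlen fun k hk₁ hk₂ => (h₁ ⟨k, hk₁⟩).symm.trans (h₂ ⟨k, hk₂⟩)

lemma mem_Cyl_ofFn (ω : ℕ → S) (n : ℕ) : ω ∈ Cyl (List.ofFn fun i : Fin n => ω i) :=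
  fun i => by simp

lemma IsPath.isFPath_ofFn {P : S → S → ℝ≥0∞} {s : S} {ω : ℕ → S} (hω : IsPath P s ω)
    {n : ℕ} (hn : 0 < n) : IsFPath P s (List.ofFn fun i : Fin n => ω i) := by
  refine ⟨?_, List.isChain_ofFn.mpr fun i _ => hω.2 i⟩
  rw [List.head?_eq_getElem?, List.getElem?_eq_getElem (by simpa using hn)]
  simp [hω.1]

section Generators

variable {P : S → S → ℝ≥0∞} {r : S → S → Prop} {s0 : S} {σ : List S}

lemma exists_embeds_of_mem_Gen {ρ : List S} {ω : ℕ → S} (hρ : ρ ∈ Gen P r s0 σ)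
    (hω : ω ∈ Cyl ρ) : ∃ f, Embeds r σ ω f ∧ f (σ.length - 1) = ρ.length - 1 := by
  obtain ⟨-, -, f, hf, hbound, hlast⟩ := hρ
  exact ⟨f, hf.congr_of_eq_lt hbound fun k hk => toSeq_eq_of_mem_Cyl s0 hω hk, hlast⟩

lemma ofFn_mem_Gen {ω : ℕ → S} {f : ℕ → ℕ} (hω : IsPath P s0 ω) (hf : Embeds r σ ω f) :
    (List.ofFn fun i : Fin (f (σ.length - 1) + 1) => ω i) ∈ Gen P r s0 σ := by
  have hbound : ∀ i < σ.length, f i < f (σ.length - 1) + 1 := fun i hi =>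
    Nat.lt_succ_of_le (hf.le_last hi)
  refine ⟨hω.isFPath_ofFn (Nat.succ_pos _), by simp, f, ?_, by simpa using hbound, by simp⟩
  exact hf.congr_of_eq_lt hbound fun k hk =>
    (toSeq_eq_of_mem_Cyl s0 (mem_Cyl_ofFn ω _) (by simpa using hk)).symm

end Generators

/-- the torrent of a rail is the disjoint union of the cones (within the
paths of `M`) of its generators, and cylinders of distinct generators are disjoint. -/
theorem torrent_eq_union_generators (P : S → S → ℝ≥0∞) (s0 : S) (σ : List S)
    (hσ : IsRail P s0 σ) :
    (Torr P (sccRel P) s0 σ =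
      ⋃ ρ ∈ Gen P (sccRel P) s0 σ, {ω | IsPath P s0 ω ∧ ω ∈ Cyl ρ}) ∧
    (∀ ρ₁ ∈ Gen P (sccRel P) s0 σ, ∀ ρ₂ ∈ Gen P (sccRel P) s0 σ,
      ρ₁ ≠ ρ₂ → Cyl ρ₁ ∩ Cyl ρ₂ = (∅ : Set (ℕ → S))) := by
  have hσne : σ ≠ [] := by
    rintro rfl
    simp [IsRail] at hσ
  have hrefl (s : S) : sccRel P s s := ⟨.refl, .refl⟩
  refine ⟨Set.ext fun ω => ⟨?_, ?_⟩, ?_⟩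
  · rintro ⟨hω, f, hf⟩
    exact Set.mem_biUnion (ofFn_mem_Gen hω hf) ⟨hω, mem_Cyl_ofFn ω _⟩
  · simp only [Set.mem_iUnion]
    rintro ⟨ρ, hρ, hω, hcyl⟩
    exact ⟨hω, (exists_embeds_of_mem_Gen hρ hcyl).imp fun _ => And.left⟩
  · intro ρ₁ hρ₁ ρ₂ hρ₂ hne
    refine Set.eq_empty_of_forall_notMem fun ω ⟨hω₁, hω₂⟩ => hne ?_
    obtain ⟨f₁, hf₁, hlast₁⟩ := exists_embeds_of_mem_Gen hρ₁ hω₁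
    obtain ⟨f₂, hf₂, hlast₂⟩ := exists_embeds_of_mem_Gen hρ₂ hω₂
    have hlen := hf₁.last_eq hrefl hσne hf₂
    refine eq_of_mem_Cyl_of_length_eq hω₁ hω₂ ?_
    have h₁ := List.length_pos_iff.mpr hρ₁.2.1
    have h₂ := List.length_pos_iff.mpr hρ₂.2.1
    omega

end CE
end

section
/- The acyclic reduction Ac(M) of a finite Markov chain M is acyclic: every nontrivial cycle in Ac(M) is at an absorbing state, i.e., if s₀'s₁'…sₙ' is a path of Ac(M) with sᵢ' = sⱼ' for some i < j, then sᵢ' is absorbing in Ac(M). -/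
open scoped ENNReal Classical
open MeasureTheory

namespace CE

variable {S : Type}

/-!
Every edge of `Ac(M)` is a path of `M`, so a cycle of `Ac(M)` is a cycle of `M`, and its first
edge `s → u` stays inside the SCC of `s`. An edge of `M` out of a trivial state and an exit edge
of a nontrivial SCC both leave the SCC, so that edge must be the self-loop added at an input
state of an SCC without output states. Such a state is absorbing in `Ac(M)`: an exit path from it
would end with an edge of `M` leaving the SCC.
-/

variable {P : S → S → ℝ≥0∞} {s t u : S}

theorem exitReach.reach (h : exitReach P s t) : Reach P s t := by
  obtain ⟨l, hl, -⟩ := h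
  exact List.relationReflTransGen_of_exists_isChain_cons _ hl (by simp)

theorem exitReach.exists_sccRel_edge (h : exitReach P s t) :
    ∃ v, sccRel P s v ∧ edge P v t := by
  obtain ⟨l, hl, hscc⟩ := h
  have hc : (s :: l ++ [t]).IsChain (edge P) := hl
  have hlast := (List.isChain_append.mp hc).2.2
  exact ⟨(s :: l).getLast (List.cons_ne_nil s l), hscc _ (List.getLast_mem _),
    hlast _ (List.getLast?_eq_getLast _) t rfl⟩

theorem AcEdge.reach (h : AcEdge P s t) : Reach P s t := by
  rcases h with ⟨-, he⟩ | ⟨-, -, hex⟩ | ⟨-, rfl, -⟩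
  · exact .single he
  · exact hex.reach
  · exact .refl

theorem nontriv_of_edge_of_reach (he : edge P s u) (hback : Reach P u s) : nontriv P s := by
  by_cases hus : u = s
  · exact .inr (hus ▸ he)
  · exact .inl ⟨u, hus, .single he, hback⟩

theorem acAbsorbing_of_noOut (hs : nontriv P s) (hno : noOut P s) : AcAbsorbing P s := by
  refine ⟨.inr (.inr ⟨hs, rfl, hno⟩), fun t ht => ?_⟩
  rcases ht with ⟨hs', -⟩ | ⟨-, hst, hex⟩ | ⟨-, rfl, -⟩
  · exact absurd hs hs'
  · obtain ⟨v, hsv, hvt⟩ := hex.exists_sccRel_edge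
    exact absurd (hno v t hsv hvt) hst
  · rfl

theorem AcEdge.acAbsorbing_of_reach (h : AcEdge P s u) (hback : Reach P u s) :
    AcAbsorbing P s := by
  rcases h with ⟨hs, he⟩ | ⟨-, hsu, hex⟩ | ⟨hs, -, hno⟩
  · exact absurd (nontriv_of_edge_of_reach he hback) hs
  · exact absurd ⟨hex.reach, hback⟩ hsu
  · exact acAbsorbing_of_noOut hs hno

theorem ac_acyclic_general (P : S → S → ℝ≥0∞) (l : List S)
    (hchain : l.Chain' (AcEdge P))
    (i j : Fin l.length) (hij : i < j) (heq : l.get i = l.get j) :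
    AcAbsorbing P (l.get i) := by
  set k : Fin l.length := ⟨i.1 + 1, lt_of_le_of_lt hij j.2⟩
  have hedge : AcEdge P (l.get i) (l.get k) := List.isChain_iff_getElem.mp hchain i k.2
  have hback : Reach P (l.get k) (l.get i) := by
    have hreach : l.Pairwise (Relation.ReflTransGen (edge P)) :=
      (hchain.imp fun _ _ h => h.reach).pairwise
    rw [heq]
    rcases (Nat.succ_le_of_lt hij).eq_or_lt with hkj | hkj
    · rw [show k = j from Fin.ext hkj]
      exact .refl
    · exact hreach.rel_get_of_lt hkj
  exact hedge.acAbsorbing_of_reach hback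

/-- the acyclic reduction is acyclic: any repetition of a state along a
path of `Ac(M)` happens at an absorbing state of `Ac(M)`. -/
theorem ac_acyclic (P : S → S → ℝ≥0∞) (l : List S)
    (hchain : l.Chain' (AcEdge P)) (hstates : ∀ x ∈ l, AcState P x)
    (i j : Fin l.length) (hij : i < j) (heq : l.get i = l.get j) :
    AcAbsorbing P (l.get i) :=
  ac_acyclic_general P l hchain i j hij heq

end CE
end

section
/- Let M = (S, s₀, P, L) be a finite Markov chain, ψ a set of states (those satisfying a propositional formula), and M_ψ the Markov chain obtained from M by making absorbing all states in ψ and all states from which ψ is unreachable. Then the sets of minimal finite paths reaching ψ coincide: FReach(M_ψ, s₀, ψ) = FReach(M, s₀, ψ). -/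
open scoped ENNReal Classical
open MeasureTheory

namespace CE

variable {S : Type}

lemma reach_head_last (P : S → S → ℝ≥0∞) :
    ∀ (σ : List S), σ.Chain' (edge P) → ∀ (h : σ ≠ []),
      Reach P (σ.head h) (σ.getLast h)
  | [], _, h => absurd rfl h
  | [_], _, _ => Relation.ReflTransGen.refl
  | a :: b :: rest, hc, _ => by
      have h1 : edge P a b := (List.isChain_cons_cons.mp hc).1
      have h2 := (List.isChain_cons_cons.mp hc).2
      have ih := reach_head_last P (b :: rest) h2 (by simp)
      simp only [List.head_cons] at ih
      rw [List.getLast_cons (by simp)]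
      exact Relation.ReflTransGen.head h1 ih

lemma absP_const (P : S → S → ℝ≥0∞) (A : Set S) (a : S)
    (ha : ¬ ∃ x ∈ A, Reach P a x) :
    ∀ σ : List S, σ.Chain' (edge (absP P A)) → σ.head? = some a → ∀ x ∈ σ, x = a
  | [], _, _, x, hx => by simp at hx
  | b :: rest, hc, hh, x, hx => by
      have hb : b = a := by simpa using hh
      subst hb
      rcases List.mem_cons.mp hx with h | hx
      · exact h
      · match rest, hc, hx with
        | c :: rest', hc, hx =>
          have h1 : edge (absP P A) b c := (List.isChain_cons_cons.mp hc).1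
          have hcond : b ∈ A ∨ ¬ ∃ x ∈ A, Reach P b x := Or.inr ha
          have hcb : c = b := by
            by_contra hne
            simp only [edge, absP, if_pos hcond, if_neg hne] at h1
            exact lt_irrefl 0 h1
          have := absP_const P A b ha (c :: rest') (List.isChain_cons_cons.mp hc).2
            (by simp [hcb])
          exact this x hx

lemma chain'_of_absP (P : S → S → ℝ≥0∞) (A : Set S) :
    ∀ σ : List S, σ.Chain' (edge (absP P A)) → ∀ (h : σ ≠ []),
      σ.getLast h ∈ A → (∀ x ∈ σ.dropLast, x ∉ A) → σ.Chain' (edge P)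
  | [], _, _, _, _ => List.isChain_nil
  | [_], _, _, _, _ => List.isChain_singleton _
  | a :: b :: rest, hc, _, hlast, hdrop => by
      have haA : a ∉ A := hdrop a (by simp)
      have h1 : edge (absP P A) a b := (List.isChain_cons_cons.mp hc).1
      have hreach : ∃ x ∈ A, Reach P a x := by
        by_contra ha
        have hall := absP_const P A a ha (a :: b :: rest) hc (by simp)
        have : (a :: b :: rest).getLast (by simp) = a :=
          hall _ (List.getLast_mem _)
        rw [this] at hlast
        exact ha ⟨a, hlast, Relation.ReflTransGen.refl⟩
      have hcond : ¬ (a ∈ A ∨ ¬ ∃ x ∈ A, Reach P a x) := by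
        push_neg; exact ⟨haA, hreach⟩
      have h1' : edge P a b := by
        simp only [edge, absP, if_neg hcond] at h1; exact h1
      have htail := chain'_of_absP P A (b :: rest) (List.isChain_cons_cons.mp hc).2
        (by simp) (by rwa [← List.getLast_cons (l := b :: rest) (by simp)])
        (fun x hx => hdrop x (by simp [List.dropLast] at hx ⊢; tauto))
      exact List.isChain_cons_cons.mpr ⟨h1', htail⟩

lemma chain'_to_absP (P : S → S → ℝ≥0∞) (A : Set S) :
    ∀ σ : List S, σ.Chain' (edge P) → ∀ (h : σ ≠ []),
      σ.getLast h ∈ A → (∀ x ∈ σ.dropLast, x ∉ A) → σ.Chain' (edge (absP P A))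
  | [], _, _, _, _ => List.isChain_nil
  | [_], _, _, _, _ => List.isChain_singleton _
  | a :: b :: rest, hc, _, hlast, hdrop => by
      have haA : a ∉ A := hdrop a (by simp)
      have h1 : edge P a b := (List.isChain_cons_cons.mp hc).1
      have hreach : ∃ x ∈ A, Reach P a x := by
        refine ⟨(a :: b :: rest).getLast (by simp), hlast, ?_⟩
        have := reach_head_last P (a :: b :: rest) hc (by simp)
        simpa using this
      have hcond : ¬ (a ∈ A ∨ ¬ ∃ x ∈ A, Reach P a x) := by
        push_neg; exact ⟨haA, hreach⟩
      have h1' : edge (absP P A) a b := by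
        simp only [edge, absP, if_neg hcond]; exact h1
      have htail := chain'_to_absP P A (b :: rest) (List.isChain_cons_cons.mp hc).2
        (by simp) (by rwa [← List.getLast_cons (l := b :: rest) (by simp)])
        (fun x hx => hdrop x (by simp [List.dropLast] at hx ⊢; tauto))
      exact List.isChain_cons_cons.mpr ⟨h1', htail⟩

/-- `FReach(M_ψ, s₀, ψ) = FReach(M, s₀, ψ)`. -/
theorem freach_absP_eq (P : S → S → ℝ≥0∞) (s0 : S) (A : Set S) :
    FReach (absP P A) s0 A = FReach P s0 A := by
  ext σ
  constructor
  · rintro ⟨⟨hh, hc⟩, ⟨hne, hlast⟩, hdrop⟩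
    exact ⟨⟨hh, chain'_of_absP P A σ hc hne hlast hdrop⟩, ⟨hne, hlast⟩, hdrop⟩
  · rintro ⟨⟨hh, hc⟩, ⟨hne, hlast⟩, hdrop⟩
    exact ⟨⟨hh, chain'_to_absP P A σ hc hne hlast hdrop⟩, ⟨hne, hlast⟩, hdrop⟩

end CE
end

section
/- Let M be a finite Markov chain, ψ a set of states, and M_ψ the modification of M making states of ψ and states not reaching ψ absorbing. For every finite path σ of M_ψ whose states all either can reach ψ in M and are not in ψ, except possibly the last one, the cylinder probabilities agree: μ_{M_ψ}(Cyl(σ)) = μ_M(Cyl(σ)) for all σ ∈ FReach(M, s₀, ψ). In particular, the probability of eventually reaching ψ is the same in M and M_ψ. -/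
open scoped ENNReal Classical
open MeasureTheory

namespace CE

variable {S : Type}

/-! Along a path of `FReach P s0 A` every state but the last lies outside `A` and reaches `A`
through the last state, so `absP P A` and `P` agree on all of its transitions, and the two
cylinder probabilities are the same product. For the union: `FReach P s0 A` is prefix-free, so its
cylinders are pairwise disjoint; each has positive measure and lies in `Cyl [s0]`, of measure 1.
Hence there are only countably many of them (the state space itself need not be countable), and
countable additivity carries the equality over to the union. -/

lemma measurableSet_cyl [MeasurableSpace S] [MeasurableSingletonClass S] (ρ : List S) :
    MeasurableSet (Cyl ρ) := by
  have : Cyl ρ = ⋂ i : Fin ρ.length, (fun ω : ℕ → S => ω i) ⁻¹' {ρ.get i} := by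
    ext ω; simp [Cyl]
  rw [this]
  exact .iInter fun i => measurable_pi_apply _ (measurableSet_singleton _)

lemma cyl_subset_of_isPrefix {ρ τ : List S} (h : ρ <+: τ) : Cyl τ ⊆ Cyl ρ := by
  obtain ⟨l, rfl⟩ := h
  intro ω hω i
  simpa [List.getElem_append_left] using hω ⟨i, by simp; omega⟩

lemma isPrefix_of_mem_cyl {ρ τ : List S} {ω : ℕ → S} (hρ : ω ∈ Cyl ρ) (hτ : ω ∈ Cyl τ)
    (hle : ρ.length ≤ τ.length) : ρ <+: τ := by
  rw [List.prefix_iff_eq_take]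
  refine List.ext_getElem (by simp [hle]) fun i hi _ => ?_
  have hρi := hρ ⟨i, hi⟩
  have hτi := hτ ⟨i, by omega⟩
  simp only [List.get_eq_getElem] at hρi hτi
  simp [← hρi, ← hτi]

section CylProb

variable {P Q : S → S → ℝ≥0∞} {ρ : List S}

lemma cylProb_singleton (P : S → S → ℝ≥0∞) (d s : S) : cylProb P d [s] = 1 := by
  simp [cylProb]

lemma cylProb_pos (hρ : ρ.IsChain (edge P)) (d : S) : 0 < cylProb P d ρ := by
  refine CanonicallyOrderedAdd.prod_pos.mpr fun i hi => ?_
  have hi : i + 1 < ρ.length := by rw [Finset.mem_range] at hi; omega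
  rw [List.getD_eq_getElem _ _ (by omega), List.getD_eq_getElem _ _ hi]
  exact List.isChain_iff_getElem.mp hρ i hi

lemma getElem_mem_dropLast {i : ℕ} (hi : i + 1 < ρ.length) : ρ[i] ∈ ρ.dropLast := by
  rw [← List.getElem_dropLast (by simp; omega)]
  exact List.getElem_mem _

lemma isChain_edge_congr (h : ∀ x ∈ ρ.dropLast, P x = Q x) :
    ρ.IsChain (edge P) ↔ ρ.IsChain (edge Q) := by
  simp only [List.isChain_iff_getElem, edge]
  exact forall₂_congr fun i hi => by rw [h _ (getElem_mem_dropLast hi)]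

lemma cylProb_congr (h : ∀ x ∈ ρ.dropLast, P x = Q x) (d : S) :
    cylProb P d ρ = cylProb Q d ρ := by
  refine Finset.prod_congr rfl fun i hi => ?_
  have hi : i + 1 < ρ.length := by rw [Finset.mem_range] at hi; omega
  rw [List.getD_eq_getElem _ _ (by omega), h _ (getElem_mem_dropLast hi)]

end CylProb

section FReach

variable {P : S → S → ℝ≥0∞} {s0 : S} {A : Set S} {ρ τ : List S}

lemma reach_getLast_of_mem (hρ : ρ.IsChain (edge P)) (hne : ρ ≠ []) :
    ∀ x ∈ ρ, Reach P x (ρ.getLast hne) :=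
  hρ.backwards_induction _ _ (fun _ _ hxy hy => .head hxy hy) fun _ => .refl

lemma absP_eq_of_mem_dropLast (hρ : ρ ∈ FReach P s0 A) :
    ∀ x ∈ ρ.dropLast, absP P A x = P x := by
  obtain ⟨⟨-, hchain⟩, ⟨hne, hlast⟩, hdrop⟩ := hρ
  intro x hx
  have hreach : ∃ a ∈ A, Reach P x a :=
    ⟨_, hlast, reach_getLast_of_mem hchain hne x (List.mem_of_mem_dropLast hx)⟩
  funext t
  simp [absP, hdrop x hx, hreach]

lemma isFPath_absP_of_mem_FReach (hρ : ρ ∈ FReach P s0 A) : IsFPath (absP P A) s0 ρ :=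
  ⟨hρ.1.1, (isChain_edge_congr (absP_eq_of_mem_dropLast hρ)).mpr hρ.1.2⟩

lemma cylProb_absP_of_mem_FReach (hρ : ρ ∈ FReach P s0 A) :
    cylProb (absP P A) s0 ρ = cylProb P s0 ρ :=
  cylProb_congr (absP_eq_of_mem_dropLast hρ) s0

lemma eq_of_isPrefix_of_mem_FReach (hρ : ρ ∈ FReach P s0 A) (hτ : τ ∈ FReach P s0 A)
    (h : ρ <+: τ) : ρ = τ := by
  obtain ⟨l, rfl⟩ := h
  obtain ⟨-, ⟨hne, hlast⟩, -⟩ := hρ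
  by_cases hl : l = []
  · simp [hl]
  refine absurd hlast (hτ.2.2 _ ?_)
  rw [List.dropLast_append_of_ne_nil hl]
  exact List.mem_append_left _ (List.getLast_mem hne)

lemma pairwiseDisjoint_cyl_FReach : (FReach P s0 A).PairwiseDisjoint Cyl := by
  intro ρ hρ τ hτ hne
  refine Set.disjoint_left.mpr fun ω hωρ hωτ => hne ?_
  rcases le_total ρ.length τ.length with hle | hle
  · exact eq_of_isPrefix_of_mem_FReach hρ hτ (isPrefix_of_mem_cyl hωρ hωτ hle)
  · exact (eq_of_isPrefix_of_mem_FReach hτ hρ (isPrefix_of_mem_cyl hωτ hωρ hle)).symm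

end FReach

lemma countable_of_pairwiseDisjoint_cyl [MeasurableSpace S] [MeasurableSingletonClass S]
    {P : S → S → ℝ≥0∞} {s0 : S} (μ : Measure (ℕ → S))
    (hμ : ∀ ρ, IsFPath P s0 ρ → μ (Cyl ρ) = cylProb P s0 ρ)
    {T : Set (List S)} (hT : ∀ ρ ∈ T, IsFPath P s0 ρ) (hdisj : T.PairwiseDisjoint Cyl) :
    T.Countable := by
  have hsub : ∀ ρ ∈ T, Cyl ρ ⊆ Cyl [s0] := fun ρ hρ => by
    obtain ⟨l, rfl⟩ := List.head?_eq_some_iff.mp (hT ρ hρ).1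
    exact cyl_subset_of_isPrefix ⟨l, rfl⟩
  have hroot : μ (Cyl [s0]) = 1 := by
    rw [hμ [s0] ⟨rfl, List.isChain_singleton s0⟩, cylProb_singleton]
  have hfin : μ (⋃ ρ : T, Cyl ρ) ≠ ⊤ :=
    ne_top_of_le_ne_top (hroot ▸ ENNReal.one_ne_top)
      (measure_mono (Set.iUnion_subset fun ρ => hsub ρ ρ.2))
  have hpos := Measure.countable_meas_pos_of_disjoint_of_meas_iUnion_ne_top μ
    (fun ρ : T => measurableSet_cyl ρ) (hdisj.subtype _ _) hfin
  have hall : {ρ : T | 0 < μ (Cyl ρ)} = Set.univ :=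
    Set.eq_univ_of_forall fun ρ => show 0 < μ (Cyl ρ) from
      (hμ ρ (hT ρ ρ.2)).symm ▸ cylProb_pos (hT ρ ρ.2).2 s0
  rw [hall] at hpos
  exact Set.countable_coe_iff.mp (Set.countable_univ_iff.mp hpos)

/-- cylinder probabilities of paths in `FReach(M, s₀, ψ)` agree in `M`
and `M_ψ`; in particular the probability of eventually reaching `ψ` is the same. -/
theorem absP_preserves_reach_prob [MeasurableSpace S] [MeasurableSingletonClass S]
    (P : S → S → ℝ≥0∞) (s0 : S) (A : Set S)
    (μ ν : Measure (ℕ → S))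
    (hμ : ∀ ρ, IsFPath P s0 ρ → μ (Cyl ρ) = cylProb P s0 ρ)
    (hν : ∀ ρ, IsFPath (absP P A) s0 ρ → ν (Cyl ρ) = cylProb (absP P A) s0 ρ) :
    (∀ ρ ∈ FReach P s0 A, ν (Cyl ρ) = μ (Cyl ρ)) ∧
    ν (⋃ ρ ∈ FReach P s0 A, Cyl ρ) = μ (⋃ ρ ∈ FReach P s0 A, Cyl ρ) := by
  have hcyl : ∀ ρ ∈ FReach P s0 A, ν (Cyl ρ) = μ (Cyl ρ) := fun ρ hρ => by
    rw [hν ρ (isFPath_absP_of_mem_FReach hρ), hμ ρ hρ.1, cylProb_absP_of_mem_FReach hρ]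
  have hdisj : (FReach P s0 A).PairwiseDisjoint Cyl := pairwiseDisjoint_cyl_FReach
  have hcount : (FReach P s0 A).Countable :=
    countable_of_pairwiseDisjoint_cyl μ hμ (fun ρ hρ => hρ.1) hdisj
  refine ⟨hcyl, ?_⟩
  rw [measure_biUnion hcount hdisj fun ρ _ => measurableSet_cyl ρ,
    measure_biUnion hcount hdisj fun ρ _ => measurableSet_cyl ρ]
  exact tsum_congr fun ρ => hcyl ρ.1 ρ.2

end CE
end
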